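/- Let n and r be positive integers with n ≥ 2r − 2 and n ≥ 2, and let T_n be the depth-two claw with n leaves: the graph with vertex set {x_0} ∪ {x_1, ..., x_n} ∪ {y_1, ..., y_n} (2n+1 distinct vertices) and edge set {x_0 y_i : i ∈ [n]} ∪ {x_i y_i : i ∈ [n]}. Then every intersecting family of r-element independent sets of T_n has size at most the number of r-element independent sets of T_n that contain the vertex x_1. -/

import Mathlib

/-!
Split an intersecting family `ℰ` into the members containing `x₀`, which are
`{x₀} ∪ {xᵢ : i ∈ P}` for an `(r-1)`-set `P ⊆ [n]` (the support), and the others, which are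
signed `r`-sets: `r`-subsets of `[n]` with a choice of `xᵢ` or `yᵢ` over each element. If the
supports pairwise meet, the Erdős–Ko–Rado theorem bounds the first part by the number of
`(r-1)`-sets containing `1`, and its signed version, proved by Katona's cycle method, bounds the
second part by the number of signed sets containing `x₁`; together these count the independent
sets containing `x₁`.

Otherwise two members have disjoint supports `P` and `Q`, and a member containing `x₀` can be
traded for one avoiding it, keeping the family intersecting and of the same size. If some `j`
lies outside `P ∪ Q`, shift `x₀` to `xⱼ` (a UV-compression); if `n = 2r - 2`, then `Q` is the
complement of `P`, and the member with support `Q` can be replaced by `{xᵢ : i ∈ P} ∪ {yⱼ}` for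
any `j ∈ Q`, since every other member contains some `xᵢ` with `i ∈ P`. Iterating reaches the
first case.
-/

/-- The depth-two claw `Tₙ`: vertices are encoded as pairs of naturals, with
`x₀ = (0,0)`, `xᵢ = (i,1)` and `yᵢ = (i,2)` for `i ∈ [n]`; the edges are
`x₀yᵢ` and `xᵢyᵢ` for `i ∈ [n]`. -/
def depthTwoClaw (n : ℕ) : SimpleGraph (ℕ × ℕ) :=
  SimpleGraph.fromEdgeSet
    {e | ∃ i ∈ Finset.Icc 1 n, e = s(((0 : ℕ), (0 : ℕ)), (i, 2)) ∨ e = s((i, 1), (i, 2))}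

/-- The vertex set of the depth-two claw `Tₙ`. -/
def depthTwoClawVerts (n : ℕ) : Finset (ℕ × ℕ) :=
  insert ((0 : ℕ), (0 : ℕ)) ((Finset.Icc 1 n) ×ˢ ({1, 2} : Finset ℕ))

open Classical in
/-- The family of `r`-element independent sets of the depth-two claw `Tₙ`. -/
noncomputable def depthTwoClawIndep (n r : ℕ) : Finset (Finset (ℕ × ℕ)) :=
  (depthTwoClawVerts n).powerset.filter
    (fun I => I.card = r ∧ ∀ u ∈ I, ∀ v ∈ I, ¬ (depthTwoClaw n).Adj u v)

open Finset

namespace ZMod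

variable {m L : ℕ}

def cyclicArc (L : ℕ) (p : ZMod m) : Finset (ZMod m) := (range L).image fun j : ℕ => p + j

lemma mem_cyclicArc {p q : ZMod m} : q ∈ cyclicArc L p ↔ ∃ j < L, p + j = q := by
  simp [cyclicArc]

lemma natCast_injOn_Iio : Set.InjOn (Nat.cast : ℕ → ZMod m) (Set.Iio m) := by
  intro a ha b hb h
  simpa [Nat.mod_eq_of_lt ha, Nat.mod_eq_of_lt hb] using (natCast_eq_natCast_iff' a b m).1 h

lemma card_cyclicArc (hLm : L ≤ m) (p : ZMod m) : #(cyclicArc L p) = L := by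
  rw [cyclicArc, card_image_of_injOn, card_range]
  intro a ha b hb h
  exact natCast_injOn_Iio (lt_of_lt_of_le (by simpa using ha) hLm)
    (lt_of_lt_of_le (by simpa using hb) hLm) (add_left_cancel h)

lemma card_filter_mem_cyclicArc [NeZero m] (hLm : L ≤ m) (q : ZMod m) :
    #{p | q ∈ cyclicArc L p} = L := by
  have : ({p | q ∈ cyclicArc L p} : Finset (ZMod m)) = (range L).image fun j : ℕ => q - j := by
    ext p
    simp only [mem_filter, mem_univ, true_and, mem_cyclicArc, mem_image, mem_range]
    exact exists_congr fun j => and_congr_right fun _ => by rw [sub_eq_iff_eq_add, eq_comm]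
  rw [this, card_image_of_injOn, card_range]
  intro a ha b hb h
  exact natCast_injOn_Iio (lt_of_lt_of_le (by simpa using ha) hLm)
    (lt_of_lt_of_le (by simpa using hb) hLm) (sub_right_injective h)

lemma val_sub_lt_or_val_sub_lt_of_not_disjoint (hLm : L ≤ m) {p q : ZMod m}
    (h : ¬Disjoint (cyclicArc L p) (cyclicArc L q)) : (q - p).val < L ∨ (p - q).val < L := by
  obtain ⟨x, hxp, hxq⟩ := not_disjoint_iff.1 h
  obtain ⟨j, hj, rfl⟩ := mem_cyclicArc.1 hxp
  obtain ⟨j', hj', hjj'⟩ := mem_cyclicArc.1 hxq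
  rcases le_total j' j with hle | hle
  · left
    have : q - p = ((j - j' : ℕ) : ZMod m) := by
      push_cast [hle]
      linear_combination hjj'
    rw [this, val_cast_of_lt (by omega)]
    omega
  · right
    have : p - q = ((j' - j : ℕ) : ZMod m) := by
      push_cast [hle]
      linear_combination -hjj'
    rw [this, val_cast_of_lt (by omega)]
    omega

lemma disjoint_cyclicArc_add (hLm : 2 * L ≤ m) (p : ZMod m) :
    Disjoint (cyclicArc L p) (cyclicArc L (p + L)) := by
  refine disjoint_left.2 fun x hx hx' => ?_
  obtain ⟨j, hj, rfl⟩ := mem_cyclicArc.1 hx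
  obtain ⟨j', hj', h⟩ := mem_cyclicArc.1 hx'
  have : ((L + j' : ℕ) : ZMod m) = (j : ℕ) := by
    push_cast
    linear_combination h
  have := natCast_injOn_Iio (Set.mem_Iio.2 (by omega)) (Set.mem_Iio.2 (by omega)) this
  omega

/-- Katona's circle lemma. -/
theorem card_le_of_pairwise_not_disjoint_cyclicArc [NeZero m] (hLm : 2 * L ≤ m)
    {T : Finset (ZMod m)}
    (hT : ∀ p ∈ T, ∀ q ∈ T, ¬Disjoint (cyclicArc L p) (cyclicArc L q)) : #T ≤ L := by
  obtain rfl | ⟨p₀, hp₀⟩ := T.eq_empty_or_nonempty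
  · simp
  have close : ∀ p ∈ T, (p - p₀).val < L ∨ (p₀ - p).val < L := fun p hp =>
    val_sub_lt_or_val_sub_lt_of_not_disjoint (by omega) (hT p₀ hp₀ p hp)
  -- the arcs at `q` and `q + L` are disjoint, so `T` never contains both
  have not_apart : ∀ p ∈ T, ∀ q ∈ T, (p - p₀).val + (p₀ - q).val ≠ L := by
    intro p hp q hq h
    have : p = q + L := by
      rw [← h, Nat.cast_add, natCast_zmod_val, natCast_zmod_val]
      ring
    exact hT q hq p hp (this ▸ disjoint_cyclicArc_add hLm q)
  have hpos : ∀ p ∈ T, ¬(p - p₀).val < L → 0 < (p₀ - p).val := by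
    intro p hp h
    have hlt := (close p hp).resolve_left h
    rw [pos_iff_ne_zero, val_ne_zero, sub_ne_zero]
    rintro rfl
    rw [sub_self, val_zero] at h hlt
    omega
  let φ : ZMod m → ℕ := fun p => if (p - p₀).val < L then (p - p₀).val else L - (p₀ - p).val
  calc #T ≤ #(range L) := card_le_card_of_injOn φ ?_ ?_
    _ = L := card_range L
  · intro p hp
    have := close p hp
    have := hpos p hp
    simp only [φ, coe_range, Set.mem_Iio]
    split_ifs <;> omega
  · intro p hp q hq h
    have := close p hp
    have := close q hq
    simp only [φ] at h
    split_ifs at h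
    · exact sub_left_injective (val_injective m h)
    · exact absurd (by omega) (not_apart p hp q hq)
    · exact absurd (by omega) (not_apart q hq p hp)
    · exact sub_right_injective (val_injective m (show (p₀ - p).val = (p₀ - q).val by omega))

end ZMod

section Arrangements

open ZMod

variable {γ : Type*} [DecidableEq γ] {m L : ℕ} [NeZero m]

def arcCount (Arr : Finset (ZMod m → γ)) (L : ℕ) (B : Finset γ) : ℕ :=
  ∑ β ∈ Arr, #{p | (cyclicArc L p).image β = B}

lemma sum_arcCount (Arr : Finset (ZMod m → γ)) (L : ℕ) (𝒜 : Finset (Finset γ)) :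
    ∑ B ∈ 𝒜, arcCount Arr L B = ∑ β ∈ Arr, #{p | (cyclicArc L p).image β ∈ 𝒜} := by
  simp only [arcCount]
  rw [sum_comm]
  exact sum_congr rfl fun β _ => sum_card_fiberwise_eq_card_filter _ _ _

lemma arcCount_image {Arr : Finset (ZMod m → γ)} (f : γ ≃ γ)
    (hf : ∀ β, f ∘ β ∈ Arr ↔ β ∈ Arr) (B : Finset γ) :
    arcCount Arr L (B.image f) = arcCount Arr L B := by
  symm
  refine sum_equiv ((Equiv.refl _).arrowCongr f) (fun β => (hf β).symm) fun β _ => ?_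
  rw [show (Equiv.refl _).arrowCongr f β = f ∘ β from rfl]
  congr 1
  ext p
  simp only [mem_filter, mem_univ, true_and]
  rw [← image_image, (image_injective f.injective).eq_iff]

/-- Katona's averaging argument: by transitivity every member of `𝒱` is an arc equally often;
each arrangement has at most `L` arcs in `ℬ` (Katona's circle lemma) and exactly `L` arcs
through `v`. -/
theorem card_le_card_filter_mem_of_arrangements (hLm : 2 * L ≤ m)
    {Arr : Finset (ZMod m → γ)} (hArr : Arr.Nonempty) (hinj : ∀ β ∈ Arr, Function.Injective β)
    {𝒱 : Finset (Finset γ)} (harc : ∀ β ∈ Arr, ∀ p, (cyclicArc L p).image β ∈ 𝒱)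
    (htrans : ∀ B ∈ 𝒱, ∀ B' ∈ 𝒱, ∃ f : γ ≃ γ, (∀ β, f ∘ β ∈ Arr ↔ β ∈ Arr) ∧ B.image f = B')
    {v : γ} (hv : ∀ β ∈ Arr, v ∈ Set.range β)
    {ℬ : Finset (Finset γ)} (hℬ : ℬ ⊆ 𝒱) (hint : (ℬ : Set (Finset γ)).Intersecting) :
    #ℬ ≤ #{B ∈ 𝒱 | v ∈ B} := by
  obtain ⟨β₀, hβ₀⟩ := hArr
  set B₀ := (cyclicArc L 0).image β₀
  have hB₀ : B₀ ∈ 𝒱 := harc β₀ hβ₀ 0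
  have const : ∀ B ∈ 𝒱, arcCount Arr L B = arcCount Arr L B₀ := by
    intro B hB
    obtain ⟨f, hf, rfl⟩ := htrans B₀ hB₀ B hB
    exact arcCount_image f hf B₀
  have pos : 0 < arcCount Arr L B₀ :=
    calc 0 < #{p | (cyclicArc L p).image β₀ = B₀} := card_pos.2 ⟨0, by simp [B₀]⟩
      _ ≤ arcCount Arr L B₀ :=
        single_le_sum (f := fun β => #{p | (cyclicArc L p).image β = B₀}) (by simp) hβ₀
  have sum_eq : ∀ 𝒜 ⊆ 𝒱, #𝒜 * arcCount Arr L B₀ =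
      ∑ β ∈ Arr, #{p | (cyclicArc L p).image β ∈ 𝒜} := by
    intro 𝒜 h𝒜
    rw [← sum_arcCount, sum_congr rfl fun B hB => const B (h𝒜 hB), sum_const, smul_eq_mul]
  have family : #ℬ * arcCount Arr L B₀ ≤ #Arr * L := by
    rw [sum_eq ℬ hℬ, ← smul_eq_mul, ← sum_const]
    refine sum_le_sum fun β hβ => card_le_of_pairwise_not_disjoint_cyclicArc hLm ?_
    intro p hp q hq
    simp only [mem_filter, mem_univ, true_and] at hp hq
    rw [← disjoint_image (hinj β hβ)]
    exact hint hp hq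
  have star : #{B ∈ 𝒱 | v ∈ B} * arcCount Arr L B₀ = #Arr * L := by
    rw [sum_eq _ (filter_subset _ _), ← smul_eq_mul, ← sum_const]
    refine sum_congr rfl fun β hβ => ?_
    obtain ⟨q, rfl⟩ := hv β hβ
    simp only [mem_filter, harc β hβ, true_and, (hinj β hβ).mem_finset_image]
    exact card_filter_mem_cyclicArc (by omega) q
  exact le_of_mul_le_mul_right (family.trans star.ge) pos

end Arrangements

lemma Finset.exists_perm_image_eq {α : Type*} [DecidableEq α] {s t u : Finset α} (hs : s ⊆ u)
    (ht : t ⊆ u) (hst : #s = #t) :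
    ∃ π : Equiv.Perm α, s.image π = t ∧ ∀ a, π a ∈ u ↔ a ∈ u := by
  obtain ⟨σ, hσ⟩ := Equiv.Perm.exists_map_finset_eq (s.subtype (· ∈ u)) (t.subtype (· ∈ u))
    (by rw [card_subtype, card_subtype, filter_true_of_mem hs, filter_true_of_mem ht, hst])
  have hπ : ∀ a (ha : a ∈ u), Equiv.Perm.ofSubtype σ a = σ ⟨a, ha⟩ :=
    fun a ha => Equiv.Perm.ofSubtype_apply_of_mem σ ha
  refine ⟨Equiv.Perm.ofSubtype σ, ?_, fun a => ?_⟩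
  · ext b
    constructor
    · intro h
      obtain ⟨a, ha, rfl⟩ := mem_image.1 h
      have : σ ⟨a, hs ha⟩ ∈ t.subtype (· ∈ u) := hσ ▸ mem_map_of_mem _ (by simpa using ha)
      simpa [hπ a (hs ha)] using this
    · intro hb
      have : (⟨b, ht hb⟩ : {x // x ∈ u}) ∈ (s.subtype (· ∈ u)).map σ.toEmbedding := by
        simpa [hσ] using hb
      obtain ⟨a, ha, hab⟩ := mem_map.1 this
      exact mem_image.2 ⟨a, by simpa using ha, by simpa [hπ a a.2] using congrArg Subtype.val hab⟩
  · by_cases ha : a ∈ u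
    · simp [hπ a ha, ha]
    · simp [Equiv.Perm.ofSubtype_apply_of_not_mem σ ha, ha]

section SignedSets

open ZMod

variable {n r : ℕ}

def signedGrid (n : ℕ) : Finset (ℕ × ℕ) := Icc 1 n ×ˢ {1, 2}

open Classical in
noncomputable def signedSets (n r : ℕ) : Finset (Finset (ℕ × ℕ)) :=
  {B ∈ (signedGrid n).powersetCard r | Set.InjOn Prod.fst (B : Set (ℕ × ℕ))}

def signSwap : Equiv.Perm (ℕ × ℕ) := Equiv.prodCongr (Equiv.refl ℕ) (Equiv.swap 1 2)

def signTwist (π : Equiv.Perm ℕ) (c : ℕ → Bool) : Equiv.Perm (ℕ × ℕ) :=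
  Equiv.prodShear π fun i => if c i then Equiv.swap 1 2 else Equiv.refl ℕ

lemma signSwap_apply (i s : ℕ) : signSwap (i, s) = (i, Equiv.swap 1 2 s) := rfl

lemma mem_signedGrid {v : ℕ × ℕ} : v ∈ signedGrid n ↔ v.1 ∈ Icc 1 n ∧ (v.2 = 1 ∨ v.2 = 2) := by
  simp [signedGrid]

lemma card_signedGrid : #(signedGrid n) = 2 * n := by
  simp [signedGrid, mul_comm]

lemma mem_signedSets {B : Finset (ℕ × ℕ)} :
    B ∈ signedSets n r ↔ B ⊆ signedGrid n ∧ #B = r ∧ Set.InjOn Prod.fst (B : Set (ℕ × ℕ)) := by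
  simp [signedSets, and_assoc]

lemma mem_signedSets_iff_of_mem {B : Finset (ℕ × ℕ)} (hB : B ∈ signedSets n r) {i s t : ℕ}
    (hs : (i, s) ∈ B) : (i, t) ∈ B ↔ t = s :=
  ⟨fun ht => congrArg Prod.snd ((mem_signedSets.1 hB).2.2 ht hs rfl), by rintro rfl; exact hs⟩

lemma image_fst_subset_of_mem_signedSets {B : Finset (ℕ × ℕ)} (hB : B ∈ signedSets n r) :
    B.image Prod.fst ⊆ Icc 1 n := by
  intro i hi
  obtain ⟨v, hv, rfl⟩ := mem_image.1 hi
  exact (mem_signedGrid.1 ((mem_signedSets.1 hB).1 hv)).1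

lemma card_image_fst_of_mem_signedSets {B : Finset (ℕ × ℕ)} (hB : B ∈ signedSets n r) :
    #(B.image Prod.fst) = r := by
  rw [card_image_of_injOn (mem_signedSets.1 hB).2.2, (mem_signedSets.1 hB).2.1]

lemma eq_or_eq_signSwap_of_fst_eq {u w : ℕ × ℕ} (hu : u ∈ signedGrid n) (hw : w ∈ signedGrid n)
    (h : u.1 = w.1) : u = w ∨ u = signSwap w := by
  obtain ⟨i, s⟩ := u
  obtain ⟨j, t⟩ := w
  simp only [mem_signedGrid] at hu hw
  simp only at h
  subst h
  rcases hu.2 with rfl | rfl <;> rcases hw.2 with rfl | rfl <;> simp [signSwap]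

lemma signTwist_mem_signedGrid_iff {π : Equiv.Perm ℕ} (hπ : ∀ i, π i ∈ Icc 1 n ↔ i ∈ Icc 1 n)
    (c : ℕ → Bool) {v : ℕ × ℕ} : signTwist π c v ∈ signedGrid n ↔ v ∈ signedGrid n := by
  obtain ⟨i, s⟩ := v
  simp only [signTwist, Equiv.prodShear_apply, mem_signedGrid, hπ]
  split_ifs
  · by_cases h1 : s = 1
    · simp [h1]
    by_cases h2 : s = 2
    · simp [h2]
    simp [Equiv.swap_apply_of_ne_of_ne h1 h2, h1, h2]
  · simp

lemma signTwist_signSwap (π : Equiv.Perm ℕ) (c : ℕ → Bool) (v : ℕ × ℕ) :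
    signTwist π c (signSwap v) = signSwap (signTwist π c v) := by
  obtain ⟨i, s⟩ := v
  by_cases h : c i <;> simp [signTwist, signSwap, h]

lemma exists_signTwist_image_eq {B B' : Finset (ℕ × ℕ)} (hB : B ∈ signedSets n r)
    (hB' : B' ∈ signedSets n r) : ∃ π : Equiv.Perm ℕ, (∀ i, π i ∈ Icc 1 n ↔ i ∈ Icc 1 n) ∧
      ∃ c : ℕ → Bool, B.image (signTwist π c) = B' := by
  obtain ⟨π, hπB, hπ⟩ := exists_perm_image_eq (image_fst_subset_of_mem_signedSets hB)
    (image_fst_subset_of_mem_signedSets hB')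
    (by rw [card_image_fst_of_mem_signedSets hB, card_image_fst_of_mem_signedSets hB'])
  -- swap the sign over `i` exactly when `B` over `i` and `B'` over `π i` disagree
  refine ⟨π, hπ, fun i => decide (¬((i, 1) ∈ B ↔ (π i, 1) ∈ B')), ?_⟩
  refine eq_of_subset_of_card_le (fun w hw => ?_) ?_
  · obtain ⟨⟨i, s⟩, hv, rfl⟩ := mem_image.1 hw
    obtain ⟨⟨j, s'⟩, hv', hj⟩ := mem_image.1
      (hπB ▸ mem_image_of_mem π (mem_image_of_mem Prod.fst hv) : π i ∈ B'.image Prod.fst)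
    simp only at hj
    subst hj
    have hs := (mem_signedGrid.1 ((mem_signedSets.1 hB).1 hv)).2
    have hs' := (mem_signedGrid.1 ((mem_signedSets.1 hB').1 hv')).2
    simp only [signTwist, Equiv.prodShear_apply, mem_signedSets_iff_of_mem hB hv,
      mem_signedSets_iff_of_mem hB' hv']
    rcases hs with rfl | rfl <;> rcases hs' with rfl | rfl <;> simp
  · rw [card_image_of_injective _ (Equiv.injective _), (mem_signedSets.1 hB).2.1,
      (mem_signedSets.1 hB').2.1]

open Classical in
noncomputable def signedArrangements (n : ℕ) [NeZero n] : Finset (ZMod (2 * n) → ℕ × ℕ) :=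
  {β ∈ Fintype.piFinset fun _ => signedGrid n |
    Function.Injective β ∧ ∀ p, β (p + n) = signSwap (β p)}

section

variable [NeZero n]

lemma mem_signedArrangements {β : ZMod (2 * n) → ℕ × ℕ} : β ∈ signedArrangements n ↔
    (∀ p, β p ∈ signedGrid n) ∧ Function.Injective β ∧ ∀ p, β (p + n) = signSwap (β p) := by
  simp [signedArrangements]

lemma signedArrangements_nonempty : (signedArrangements n).Nonempty := by
  have hn := NeZero.pos n
  have val_add_n : ∀ p : ZMod (2 * n), (p + n).val = (p.val + n) % (2 * n) := fun p => by
    rw [val_add, val_cast_of_lt (by omega)]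
  refine ⟨fun p => if p.val < n then (p.val + 1, 1) else (p.val - n + 1, 2),
    mem_signedArrangements.2 ⟨fun p => ?_, fun p q h => ?_, fun p => ?_⟩⟩
  · have := val_lt p
    split_ifs
    · exact mem_signedGrid.2 ⟨mem_Icc.2 ⟨by omega, by omega⟩, Or.inl rfl⟩
    · exact mem_signedGrid.2 ⟨mem_Icc.2 ⟨by omega, by omega⟩, Or.inr rfl⟩
  · have := val_lt p
    have := val_lt q
    refine ZMod.val_injective _ ?_
    dsimp only at h
    split_ifs at h <;> rw [Prod.mk.injEq] at h <;> omega
  · have := val_lt p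
    by_cases hp : p.val < n
    · rw [val_add_n, Nat.mod_eq_of_lt (by omega), if_neg (by omega), if_pos hp, signSwap_apply,
        Equiv.swap_apply_left]
      exact Prod.ext (by omega) rfl
    · rw [val_add_n, Nat.mod_eq_sub_mod (by omega), Nat.mod_eq_of_lt (by omega),
        if_pos (by omega), if_neg hp, signSwap_apply, Equiv.swap_apply_right]
      exact Prod.ext (by omega) rfl

lemma mem_range_of_mem_signedArrangements {β : ZMod (2 * n) → ℕ × ℕ}
    (hβ : β ∈ signedArrangements n) {v : ℕ × ℕ} (hv : v ∈ signedGrid n) : v ∈ Set.range β := by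
  obtain ⟨hgrid, hinj, -⟩ := mem_signedArrangements.1 hβ
  have : univ.image β = signedGrid n :=
    eq_of_subset_of_card_le (fun _ h => by obtain ⟨p, -, rfl⟩ := mem_image.1 h; exact hgrid p)
      (by rw [card_signedGrid, card_image_of_injective _ hinj, card_univ, ZMod.card])
  simpa [← this] using hv

lemma image_cyclicArc_mem_signedSets (hrn : r ≤ n) {β : ZMod (2 * n) → ℕ × ℕ}
    (hβ : β ∈ signedArrangements n) (p : ZMod (2 * n)) :
    (cyclicArc r p).image β ∈ signedSets n r := by
  obtain ⟨hgrid, hinj, hswap⟩ := mem_signedArrangements.1 hβ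
  refine mem_signedSets.2 ⟨fun v hv => ?_, ?_, ?_⟩
  · obtain ⟨q, -, rfl⟩ := mem_image.1 hv
    exact hgrid q
  · rw [card_image_of_injective _ hinj, card_cyclicArc (by omega)]
  · simp only [coe_image, Set.InjOn, Set.mem_image, mem_coe, forall_exists_index, and_imp]
    rintro _ a ha rfl _ b hb rfl h
    obtain ⟨j, hj, rfl⟩ := mem_cyclicArc.1 ha
    obtain ⟨j', hj', rfl⟩ := mem_cyclicArc.1 hb
    refine (eq_or_eq_signSwap_of_fst_eq (hgrid _) (hgrid _) h).resolve_right fun h' => ?_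
    rw [← hswap, hinj.eq_iff, add_assoc, add_right_inj, ← Nat.cast_add] at h'
    have := natCast_injOn_Iio (Set.mem_Iio.2 (by omega)) (Set.mem_Iio.2 (by omega)) h'
    omega

lemma signTwist_comp_mem_signedArrangements_iff {π : Equiv.Perm ℕ}
    (hπ : ∀ i, π i ∈ Icc 1 n ↔ i ∈ Icc 1 n) (c : ℕ → Bool) {β : ZMod (2 * n) → ℕ × ℕ} :
    signTwist π c ∘ β ∈ signedArrangements n ↔ β ∈ signedArrangements n := by
  simp only [mem_signedArrangements, Function.comp_apply, signTwist_mem_signedGrid_iff hπ,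
    Equiv.comp_injective, ← signTwist_signSwap, (Equiv.injective _).eq_iff]

end

theorem card_le_card_filter_mem_signedSets (hr : 1 ≤ r) (hrn : r ≤ n)
    {ℬ : Finset (Finset (ℕ × ℕ))} (hℬ : ℬ ⊆ signedSets n r)
    (hint : (ℬ : Set (Finset (ℕ × ℕ))).Intersecting) :
    #ℬ ≤ #{B ∈ signedSets n r | (1, 1) ∈ B} := by
  have : NeZero n := ⟨by omega⟩
  refine card_le_card_filter_mem_of_arrangements (m := 2 * n) (by omega)
    signedArrangements_nonempty (fun β hβ => (mem_signedArrangements.1 hβ).2.1)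
    (fun β hβ p => image_cyclicArc_mem_signedSets hrn hβ p) (fun B hB B' hB' => ?_)
    (fun β hβ => mem_range_of_mem_signedArrangements hβ ?_) hℬ hint
  · obtain ⟨π, hπ, c, h⟩ := exists_signTwist_image_eq hB hB'
    exact ⟨signTwist π c, fun β => signTwist_comp_mem_signedArrangements_iff hπ c, h⟩
  · exact mem_signedGrid.2 ⟨mem_Icc.2 ⟨le_rfl, by omega⟩, Or.inl rfl⟩

end SignedSets

theorem Finset.card_le_of_intersecting_of_subset_powersetCard {α : Type*} [DecidableEq α]
    {s : Finset α} {k : ℕ} {𝒜 : Finset (Finset α)} (h𝒜 : 𝒜 ⊆ s.powersetCard k)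
    (hint : (𝒜 : Set (Finset α)).Intersecting) (hk : 2 * k ≤ #s) :
    #𝒜 ≤ (#s - 1).choose (k - 1) := by
  have hsub : ∀ A ∈ 𝒜, A ⊆ s := fun A hA => (mem_powersetCard.1 (h𝒜 hA)).1
  let g : Finset α → Finset (Fin #s) := fun A => (A.subtype (· ∈ s)).map s.equivFin.toEmbedding
  have mem_g : ∀ A, ∀ x (hx : x ∈ s), s.equivFin ⟨x, hx⟩ ∈ g A ↔ x ∈ A := by
    simp [g]
  have hg : Set.InjOn g 𝒜 := by
    intro A hA B hB h
    ext x
    by_cases hx : x ∈ s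
    · rw [← mem_g A x hx, ← mem_g B x hx, h]
    · exact iff_of_false (fun h => hx (hsub A hA h)) (fun h => hx (hsub B hB h))
  rw [← card_image_of_injOn hg]
  refine erdos_ko_rado ?_ ?_ (by omega)
  · simp only [coe_image]
    rintro _ ⟨A, hA, rfl⟩ _ ⟨B, hB, rfl⟩ hAB
    obtain ⟨x, hxA, hxB⟩ := not_disjoint_iff.1 (hint hA hB)
    have hx := hsub A hA hxA
    exact disjoint_left.1 hAB ((mem_g A x hx).2 hxA) ((mem_g B x hx).2 hxB)
  · simp only [coe_image]
    rintro _ ⟨A, hA, rfl⟩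
    rw [card_map, card_subtype, filter_true_of_mem (hsub A hA), (mem_powersetCard.1 (h𝒜 hA)).2]

namespace UV

variable {α : Type*} [DecidableEq α] {a b : α} {ℰ : Finset (Finset α)}

lemma compress_mem_of_mem_of_mem_compression {X : Finset α} (hX : X ∈ compression {a} {b} ℰ)
    (hXℰ : X ∈ ℰ) : compress {a} {b} X ∈ ℰ :=
  ((mem_compression.1 hX).resolve_right fun h => h.1 hXℰ).2

lemma not_disjoint_of_mem_compression_of_notMem (hint : (ℰ : Set (Finset α)).Intersecting)
    {X Y : Finset α} (hX : X ∈ compression {a} {b} ℰ) (hXℰ : X ∉ ℰ) (hYℰ : Y ∈ ℰ)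
    (hY : compress {a} {b} Y ∈ ℰ) : ¬Disjoint X Y := by
  have haX : a ∈ X := singleton_subset_iff.1 (le_of_mem_compression_of_notMem hX hXℰ)
  have hbX : b ∉ X := disjoint_singleton_left.1 (disjoint_of_mem_compression_of_notMem hX hXℰ)
  have hX' : (X ∪ {b}) \ {a} ∈ ℰ := sup_sdiff_mem_of_mem_compression_of_notMem hX hXℰ
  by_cases haY : a ∈ Y
  · exact not_disjoint_iff.2 ⟨a, haX, haY⟩
  -- `Y'` is `Y` with `b` replaced by `a`, if present
  obtain ⟨Y', hY'ℰ, hY'Y, hbY'⟩ : ∃ Y' ∈ ℰ, Y' ⊆ Y ∪ {a} ∧ b ∉ Y' := by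
    by_cases hbY : b ∈ Y
    · refine ⟨_, hY, ?_, ?_⟩ <;>
        rw [compress_of_disjoint_of_le (disjoint_singleton_left.2 haY)
          (singleton_subset_iff.2 hbY)]
      · exact sdiff_subset
      · simp
    · exact ⟨Y, hYℰ, subset_union_left, hbY⟩
  obtain ⟨w, hwX, hwY⟩ := not_disjoint_iff.1 (hint hX' hY'ℰ)
  simp only [mem_sdiff, mem_union, mem_singleton] at hwX
  refine not_disjoint_iff.2 ⟨w, hwX.1.resolve_right fun h => hbY' (h ▸ hwY), ?_⟩
  exact (mem_union.1 (hY'Y hwY)).resolve_right fun h => hwX.2 (mem_singleton.1 h)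

theorem intersecting_compression (hint : (ℰ : Set (Finset α)).Intersecting) :
    (compression {a} {b} ℰ : Set (Finset α)).Intersecting := by
  intro X hX Y hY
  by_cases hXℰ : X ∈ ℰ <;> by_cases hYℰ : Y ∈ ℰ
  · exact hint hXℰ hYℰ
  · exact fun h => not_disjoint_of_mem_compression_of_notMem hint hY hYℰ hXℰ
      (compress_mem_of_mem_of_mem_compression hX hXℰ) h.symm
  · exact not_disjoint_of_mem_compression_of_notMem hint hX hXℰ hYℰ
      (compress_mem_of_mem_of_mem_compression hY hYℰ)
  · exact not_disjoint_iff.2 ⟨a, singleton_subset_iff.1 (le_of_mem_compression_of_notMem hX hXℰ),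
      singleton_subset_iff.1 (le_of_mem_compression_of_notMem hY hYℰ)⟩

theorem card_filter_mem_compression_lt {A : Finset α} (hA : A ∈ ℰ) (hbA : b ∈ A)
    (hcomp : compress {a} {b} A ∉ ℰ) :
    #{X ∈ compression {a} {b} ℰ | b ∈ X} < #{X ∈ ℰ | b ∈ X} := by
  refine (card_le_card fun X hX => ?_).trans_lt (card_erase_lt_of_mem (mem_filter.2 ⟨hA, hbA⟩))
  obtain ⟨hX, hbX⟩ := mem_filter.1 hX
  have hXℰ : X ∈ ℰ := by
    by_contra hXℰ
    exact disjoint_singleton_left.1 (disjoint_of_mem_compression_of_notMem hX hXℰ) hbX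
  refine mem_erase.2 ⟨?_, mem_filter.2 ⟨hXℰ, hbX⟩⟩
  rintro rfl
  exact hcomp (compress_mem_of_mem_of_mem_compression hX hXℰ)

end UV

section DepthTwoClaw

local notation "x₀" => ((0 : ℕ), (0 : ℕ))
local notation "x₁" => ((1 : ℕ), (1 : ℕ))

variable {n r : ℕ}

lemma forall_not_adj_depthTwoClaw_iff {I : Finset (ℕ × ℕ)} :
    (∀ u ∈ I, ∀ v ∈ I, ¬(depthTwoClaw n).Adj u v) ↔
      ∀ i ∈ Icc 1 n, (i, 2) ∈ I → x₀ ∉ I ∧ (i, 1) ∉ I := by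
  simp only [depthTwoClaw, SimpleGraph.fromEdgeSet_adj]
  constructor
  · intro h i hi h2
    exact ⟨fun h0 => h _ h0 _ h2 ⟨⟨i, hi, Or.inl rfl⟩, by simp⟩,
      fun h1 => h _ h1 _ h2 ⟨⟨i, hi, Or.inr rfl⟩, by simp⟩⟩
  · rintro h u hu v hv ⟨⟨i, hi, he | he⟩, -⟩ <;>
      rcases Sym2.eq_iff.1 he with ⟨rfl, rfl⟩ | ⟨rfl, rfl⟩
    exacts [(h i hi hv).1 hu, (h i hi hu).1 hv, (h i hi hv).2 hu, (h i hi hu).2 hv]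

lemma mem_depthTwoClawIndep {I : Finset (ℕ × ℕ)} : I ∈ depthTwoClawIndep n r ↔
    I ⊆ insert x₀ (signedGrid n) ∧ #I = r ∧ ∀ i ∈ Icc 1 n, (i, 2) ∈ I → x₀ ∉ I ∧ (i, 1) ∉ I := by
  simp only [depthTwoClawIndep, mem_filter, mem_powerset, forall_not_adj_depthTwoClaw_iff]
  rfl

lemma x0_notMem_signedGrid : x₀ ∉ signedGrid n := by
  simp [mem_signedGrid]

lemma mem_depthTwoClawIndep_iff_mem_signedSets {I : Finset (ℕ × ℕ)} (h : x₀ ∉ I) :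
    I ∈ depthTwoClawIndep n r ↔ I ∈ signedSets n r := by
  rw [mem_depthTwoClawIndep, mem_signedSets, subset_insert_iff_of_notMem h]
  refine and_congr_right fun hI => and_congr_right fun _ => ⟨fun hind => ?_, fun hinj => ?_⟩
  · intro u hu w hw hfst
    refine (eq_or_eq_signSwap_of_fst_eq (hI hu) (hI hw) hfst).resolve_right ?_
    obtain ⟨i, s⟩ := w
    have hw' := mem_signedGrid.1 (hI hw)
    rcases hw'.2 with rfl | rfl <;> rintro rfl
    · exact (hind i hw'.1 hu).2 hw
    · exact (hind i hw'.1 hw).2 hu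
  · exact fun i _ h2 => ⟨fun h0 => h h0, fun h1 => by simpa using hinj h1 h2 rfl⟩

def xSet (P : Finset ℕ) : Finset (ℕ × ℕ) := P.image fun i => (i, 1)

lemma mk_mem_xSet {P : Finset ℕ} {i s : ℕ} : (i, s) ∈ xSet P ↔ i ∈ P ∧ s = 1 := by
  simp [xSet, eq_comm]

lemma card_xSet (P : Finset ℕ) : #(xSet P) = #P :=
  card_image_of_injective _ fun i j h => by simpa using h

lemma x0_notMem_xSet (P : Finset ℕ) : x₀ ∉ xSet P := by
  simp [mk_mem_xSet]

lemma xSet_mem_signedSets {P : Finset ℕ} (hP : P ⊆ Icc 1 n) (hc : #P = r) :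
    xSet P ∈ signedSets n r := by
  refine mem_signedSets.2 ⟨fun v hv => ?_, (card_xSet P).trans hc, fun v hv w hw h => ?_⟩
  · obtain ⟨i, hi, rfl⟩ := mem_image.1 hv
    simpa [mem_signedGrid] using hP hi
  · obtain ⟨i, -, rfl⟩ := mem_image.1 hv
    obtain ⟨j, -, rfl⟩ := mem_image.1 hw
    simpa using h

lemma insert_x0_xSet_injective : Function.Injective fun P => insert x₀ (xSet P) := by
  intro P Q h
  ext i
  simpa [mk_mem_xSet] using congrArg ((i, 1) ∈ ·) h

lemma insert_x0_xSet_mem_depthTwoClawIndep_iff (hr : 1 ≤ r) {P : Finset ℕ} :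
    insert x₀ (xSet P) ∈ depthTwoClawIndep n r ↔ P ∈ (Icc 1 n).powersetCard (r - 1) := by
  rw [mem_depthTwoClawIndep, mem_powersetCard, insert_subset_insert_iff (x0_notMem_xSet P),
    card_insert_of_notMem (x0_notMem_xSet P), card_xSet]
  have : xSet P ⊆ signedGrid n ↔ P ⊆ Icc 1 n := by
    simp [xSet, subset_iff, mem_signedGrid]
  simp only [this, mem_insert, mk_mem_xSet]
  exact and_congr_right fun _ => ⟨fun h => by omega, fun h => ⟨by omega, by simp⟩⟩

lemma exists_eq_insert_x0_xSet {I : Finset (ℕ × ℕ)} (hI : I ∈ depthTwoClawIndep n r)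
    (h : x₀ ∈ I) : ∃ P ∈ (Icc 1 n).powersetCard (r - 1), I = insert x₀ (xSet P) := by
  obtain ⟨hsub, hcard, hind⟩ := mem_depthTwoClawIndep.1 hI
  have snd : ∀ v ∈ I.erase x₀, (v.1, 1) = v := by
    intro v hv
    obtain ⟨hne, hvI⟩ := mem_erase.1 hv
    have hv' := mem_signedGrid.1 ((mem_insert.1 (hsub hvI)).resolve_left hne)
    refine Prod.ext rfl (hv'.2.resolve_right fun h2 => (hind v.1 hv'.1 ?_).1 h).symm
    rwa [← h2]
  have hI' : I = insert x₀ (xSet ((I.erase x₀).image Prod.fst)) := by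
    rw [xSet, image_image, image_congr (f := (fun i => (i, 1)) ∘ Prod.fst) (g := id) snd,
      image_id, insert_erase h]
  refine ⟨_, ?_, hI'⟩
  rwa [hI', insert_x0_xSet_mem_depthTwoClawIndep_iff (hcard ▸ card_pos.2 ⟨x₀, h⟩)] at hI

noncomputable def x0Supports (ℰ : Finset (Finset (ℕ × ℕ))) : Finset (Finset ℕ) :=
  ℰ.preimage (fun P => insert x₀ (xSet P)) insert_x0_xSet_injective.injOn

lemma mem_x0Supports {ℰ : Finset (Finset (ℕ × ℕ))} {P : Finset ℕ} :
    P ∈ x0Supports ℰ ↔ insert x₀ (xSet P) ∈ ℰ :=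
  mem_preimage

lemma card_x0Supports {ℰ : Finset (Finset (ℕ × ℕ))} (hℰ : ℰ ⊆ depthTwoClawIndep n r) :
    #(x0Supports ℰ) = #{A ∈ ℰ | x₀ ∈ A} := by
  classical
  rw [x0Supports, card_preimage]
  refine congrArg card (filter_congr fun A hA => ⟨?_, fun h => ?_⟩)
  · rintro ⟨P, rfl⟩
    exact mem_insert_self _ _
  · obtain ⟨P, -, rfl⟩ := exists_eq_insert_x0_xSet (hℰ hA) h
    exact ⟨P, rfl⟩

lemma x0Supports_subset (hr : 1 ≤ r) {ℰ : Finset (Finset (ℕ × ℕ))}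
    (hℰ : ℰ ⊆ depthTwoClawIndep n r) : x0Supports ℰ ⊆ (Icc 1 n).powersetCard (r - 1) :=
  fun _ hP => (insert_x0_xSet_mem_depthTwoClawIndep_iff hr).1 (hℰ (mem_x0Supports.1 hP))

lemma x0Supports_filter_mem_x1 (hr : 1 ≤ r) :
    x0Supports {I ∈ depthTwoClawIndep n r | x₁ ∈ I} =
      {P ∈ (Icc 1 n).powersetCard (r - 1) | {1} ⊆ P} := by
  ext P
  simp [mem_x0Supports, insert_x0_xSet_mem_depthTwoClawIndep_iff hr, mk_mem_xSet]

lemma filter_x0_notMem_filter_mem_x1 :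
    {I ∈ {I ∈ depthTwoClawIndep n r | x₁ ∈ I} | x₀ ∉ I} = {B ∈ signedSets n r | x₁ ∈ B} := by
  ext I
  simp only [mem_filter]
  by_cases h : x₀ ∈ I
  · simp only [h, not_true_eq_false, and_false, false_iff, not_and]
    exact fun hI _ => x0_notMem_signedGrid ((mem_signedSets.1 hI).1 h)
  · simp [h, mem_depthTwoClawIndep_iff_mem_signedSets h]

theorem card_le_card_star_of_intersecting_x0Supports (hr : 2 ≤ r) (hrn : 2 * r - 2 ≤ n)
    {ℰ : Finset (Finset (ℕ × ℕ))} (hℰ : ℰ ⊆ depthTwoClawIndep n r)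
    (hint : (ℰ : Set (Finset (ℕ × ℕ))).Intersecting)
    (hsupp : (x0Supports ℰ : Set (Finset ℕ)).Intersecting) :
    #ℰ ≤ #{I ∈ depthTwoClawIndep n r | x₁ ∈ I} := by
  rw [← card_filter_add_card_filter_not (s := ℰ) (x₀ ∈ ·),
    ← card_filter_add_card_filter_not (s := {I ∈ depthTwoClawIndep n r | x₁ ∈ I}) (x₀ ∈ ·)]
  refine add_le_add ?_ ?_
  · rw [← card_x0Supports hℰ, ← card_x0Supports (filter_subset _ _),
      x0Supports_filter_mem_x1 (by omega),
      card_filter_powersetCard_subset _ _ _ (singleton_subset_iff.2 (mem_Icc.2 ⟨le_rfl, by omega⟩))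
        (by rw [card_singleton]; omega), card_singleton]
    exact card_le_of_intersecting_of_subset_powersetCard (x0Supports_subset (by omega) hℰ)
      hsupp (by rw [Nat.card_Icc]; omega)
  · rw [filter_x0_notMem_filter_mem_x1]
    refine card_le_card_filter_mem_signedSets (by omega) (by omega) (fun A hA => ?_)
      (hint.mono (coe_subset.2 (filter_subset _ _)))
    obtain ⟨hA, h⟩ := mem_filter.1 hA
    exact (mem_depthTwoClawIndep_iff_mem_signedSets h).1 (hℰ hA)

lemma compress_insert_x0_xSet {P : Finset ℕ} {j : ℕ} (hj : j ∉ P) :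
    UV.compress {(j, 1)} {x₀} (insert x₀ (xSet P)) = xSet (insert j P) := by
  rw [UV.compress_of_disjoint_of_le (by simp [mk_mem_xSet, hj]) (by simp)]
  ext ⟨i, s⟩
  by_cases hs : s = 1 <;> simp [hs, mk_mem_xSet, or_comm]

lemma compression_subset_depthTwoClawIndep (hr : 1 ≤ r) {ℰ : Finset (Finset (ℕ × ℕ))}
    (hℰ : ℰ ⊆ depthTwoClawIndep n r) {j : ℕ} (hj : j ∈ Icc 1 n) :
    UV.compression {(j, 1)} {x₀} ℰ ⊆ depthTwoClawIndep n r := by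
  intro X hX
  obtain ⟨hXℰ, -⟩ | ⟨hXℰ, B, hB, rfl⟩ := UV.mem_compression.1 hX
  · exact hℰ hXℰ
  have hB' : Disjoint {(j, 1)} B ∧ {x₀} ≤ B := by
    by_contra h
    rw [UV.compress, if_neg h] at hXℰ
    exact hXℰ hB
  obtain ⟨P, hP, rfl⟩ := exists_eq_insert_x0_xSet (hℰ hB) (singleton_subset_iff.1 hB'.2)
  have hjP : j ∉ P := fun h => disjoint_singleton_left.1 hB'.1 (by simp [mk_mem_xSet, h])
  obtain ⟨hPsub, hPcard⟩ := mem_powersetCard.1 hP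
  rw [compress_insert_x0_xSet hjP, mem_depthTwoClawIndep_iff_mem_signedSets (x0_notMem_xSet _)]
  exact xSet_mem_signedSets (insert_subset hj hPsub)
    (by rw [card_insert_of_notMem hjP, hPcard]; omega)

lemma exists_compression_of_disjoint_x0Supports (hr : 1 ≤ r) {ℰ : Finset (Finset (ℕ × ℕ))}
    (hℰ : ℰ ⊆ depthTwoClawIndep n r) (hint : (ℰ : Set (Finset (ℕ × ℕ))).Intersecting)
    {P Q : Finset ℕ} (hP : P ∈ x0Supports ℰ) (hQ : Q ∈ x0Supports ℰ) (hPQ : Disjoint P Q)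
    {j : ℕ} (hj : j ∈ Icc 1 n) (hjP : j ∉ P) (hjQ : j ∉ Q) :
    ∃ ℰ' ⊆ depthTwoClawIndep n r, (ℰ' : Set (Finset (ℕ × ℕ))).Intersecting ∧ #ℰ' = #ℰ ∧
      #{A ∈ ℰ' | x₀ ∈ A} < #{A ∈ ℰ | x₀ ∈ A} := by
  refine ⟨UV.compression {(j, 1)} {x₀} ℰ, compression_subset_depthTwoClawIndep hr hℰ hj,
    UV.intersecting_compression hint, UV.card_compression _ _ _,
    UV.card_filter_mem_compression_lt (mem_x0Supports.1 hP) (mem_insert_self _ _) ?_⟩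
  -- `{xᵢ : i ∈ insert j P}` would miss the member with support `Q`
  rw [compress_insert_x0_xSet hjP]
  refine fun h => hint h (mem_x0Supports.1 hQ) (disjoint_left.2 ?_)
  rintro ⟨i, s⟩ h1 h2
  simp only [mk_mem_xSet, mem_insert, Prod.mk.injEq] at h1 h2
  obtain ⟨rfl | hi, rfl⟩ := h1
  · exact hjQ (h2.resolve_left (by omega)).1
  · exact disjoint_left.1 hPQ hi (h2.resolve_left (by omega)).1

lemma insert_mk_two_xSet_mem_signedSets {P : Finset ℕ} (hP : P ⊆ Icc 1 n) (hPcard : #P + 1 = r)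
    {j : ℕ} (hj : j ∈ Icc 1 n) (hjP : j ∉ P) : insert (j, 2) (xSet P) ∈ signedSets n r := by
  have hx := mem_signedSets.1 (xSet_mem_signedSets hP rfl)
  have hjx : (j, 2) ∉ xSet P := by simp [mk_mem_xSet]
  refine mem_signedSets.2 ⟨insert_subset (by simpa [mem_signedGrid] using hj) hx.1, ?_, ?_⟩
  · rw [card_insert_of_notMem hjx, hx.2.1, hPcard]
  · rw [coe_insert, Set.injOn_insert hjx]
    exact ⟨hx.2.2, by simp [xSet, hjP]⟩

/-- If `n = 2r - 2`, disjoint supports `P` and `Q` partition `[n]`, so every other support meets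
`P`. -/
lemma exists_mk_one_mem_of_disjoint_x0Supports (hn : n + 2 = 2 * r)
    {ℰ : Finset (Finset (ℕ × ℕ))} (hℰ : ℰ ⊆ depthTwoClawIndep n r)
    (hint : (ℰ : Set (Finset (ℕ × ℕ))).Intersecting)
    {P Q : Finset ℕ} (hP : P ∈ x0Supports ℰ) (hQ : Q ∈ x0Supports ℰ) (hPQ : Disjoint P Q)
    {W : Finset (ℕ × ℕ)} (hW : W ∈ ℰ) (hne : W ≠ insert x₀ (xSet Q)) : ∃ i ∈ P, (i, 1) ∈ W := by
  by_cases h0 : x₀ ∈ W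
  · obtain ⟨hPsub, hPcard⟩ := mem_powersetCard.1 (x0Supports_subset (by omega) hℰ hP)
    have compl : ∀ R ∈ (Icc 1 n).powersetCard (r - 1), Disjoint R P → R = Icc 1 n \ P :=
      fun R hR hRP => eq_of_subset_of_card_le (subset_sdiff.2 ⟨(mem_powersetCard.1 hR).1, hRP⟩)
        (by rw [card_sdiff_of_subset hPsub, Nat.card_Icc, (mem_powersetCard.1 hR).2, hPcard]; omega)
    obtain ⟨R, hR, rfl⟩ := exists_eq_insert_x0_xSet (hℰ hW) h0
    by_contra! hRP
    have hRP' : Disjoint R P :=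
      disjoint_left.2 fun i hiR hiP => hRP i hiP (by simp [mk_mem_xSet, hiR])
    rw [compl R hR hRP', ← compl Q (x0Supports_subset (by omega) hℰ hQ) hPQ.symm] at hne
    exact hne rfl
  · obtain ⟨⟨i, s⟩, hwW, hw⟩ := not_disjoint_iff.1 (hint hW (mem_x0Supports.1 hP))
    rcases mem_insert.1 hw with h | hw
    · exact absurd (h ▸ hwW) h0
    obtain ⟨hi, rfl⟩ := mk_mem_xSet.1 hw
    exact ⟨i, hi, hwW⟩

lemma exists_replacement_of_disjoint_x0Supports (hr : 2 ≤ r) (hn : n + 2 = 2 * r)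
    {ℰ : Finset (Finset (ℕ × ℕ))} (hℰ : ℰ ⊆ depthTwoClawIndep n r)
    (hint : (ℰ : Set (Finset (ℕ × ℕ))).Intersecting)
    {P Q : Finset ℕ} (hP : P ∈ x0Supports ℰ) (hQ : Q ∈ x0Supports ℰ) (hPQ : Disjoint P Q) :
    ∃ ℰ' ⊆ depthTwoClawIndep n r, (ℰ' : Set (Finset (ℕ × ℕ))).Intersecting ∧ #ℰ' = #ℰ ∧
      #{A ∈ ℰ' | x₀ ∈ A} < #{A ∈ ℰ | x₀ ∈ A} := by
  obtain ⟨hPsub, hPcard⟩ := mem_powersetCard.1 (x0Supports_subset (by omega) hℰ hP)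
  obtain ⟨hQsub, hQcard⟩ := mem_powersetCard.1 (x0Supports_subset (by omega) hℰ hQ)
  obtain ⟨j, hjQ⟩ : Q.Nonempty := card_pos.1 (by omega)
  have hjP : j ∉ P := disjoint_right.1 hPQ hjQ
  set Z := insert (j, 2) (xSet P)
  have hZ : Z ∈ depthTwoClawIndep n r :=
    (mem_depthTwoClawIndep_iff_mem_signedSets (by simp [Z, mk_mem_xSet])).2
      (insert_mk_two_xSet_mem_signedSets hPsub (by omega) (hQsub hjQ) hjP)
  have hQℰ := mem_x0Supports.1 hQ
  have hZℰ : Z ∉ ℰ := by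
    refine fun h => hint h hQℰ (disjoint_left.2 ?_)
    rintro ⟨i, s⟩ h1 h2
    simp only [Z, mem_insert, mk_mem_xSet, Prod.mk.injEq] at h1 h2
    obtain ⟨rfl, rfl⟩ | ⟨hi, rfl⟩ := h1
    · simp at h2
    · exact disjoint_left.1 hPQ hi (by simpa using h2)
  refine ⟨insert Z (ℰ.erase (insert x₀ (xSet Q))),
    insert_subset hZ ((erase_subset _ _).trans hℰ), ?_, ?_, ?_⟩
  · rw [coe_insert]
    refine (hint.mono (coe_subset.2 (erase_subset _ _))).insert (by simp [Z]) fun W hW => ?_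
    obtain ⟨hne, hW⟩ := mem_erase.1 hW
    obtain ⟨i, hi, hiW⟩ := exists_mk_one_mem_of_disjoint_x0Supports hn hℰ hint hP hQ hPQ hW hne
    exact not_disjoint_iff.2 ⟨(i, 1), by simp [Z, mk_mem_xSet, hi], hiW⟩
  · rw [card_insert_of_notMem (fun h => hZℰ (mem_of_mem_erase h)), card_erase_of_mem hQℰ]
    have := card_pos.2 ⟨_, hQℰ⟩
    omega
  · rw [filter_insert, if_neg (by simp [Z, mk_mem_xSet]), filter_erase]
    exact card_erase_lt_of_mem (mem_filter.2 ⟨hQℰ, mem_insert_self _ _⟩)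

lemma exists_fewer_x0_of_not_intersecting_x0Supports (hr : 2 ≤ r) (hrn : 2 * r - 2 ≤ n)
    {ℰ : Finset (Finset (ℕ × ℕ))} (hℰ : ℰ ⊆ depthTwoClawIndep n r)
    (hint : (ℰ : Set (Finset (ℕ × ℕ))).Intersecting)
    (hsupp : ¬(x0Supports ℰ : Set (Finset ℕ)).Intersecting) :
    ∃ ℰ' ⊆ depthTwoClawIndep n r, (ℰ' : Set (Finset (ℕ × ℕ))).Intersecting ∧ #ℰ' = #ℰ ∧
      #{A ∈ ℰ' | x₀ ∈ A} < #{A ∈ ℰ | x₀ ∈ A} := by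
  simp only [Set.Intersecting, mem_coe, not_forall, not_not] at hsupp
  obtain ⟨P, hP, Q, hQ, hPQ⟩ := hsupp
  obtain hn | hn : n + 2 = 2 * r ∨ 2 * r - 1 ≤ n := by omega
  · exact exists_replacement_of_disjoint_x0Supports hr hn hℰ hint hP hQ hPQ
  obtain ⟨j, hj, hjPQ⟩ := exists_mem_notMem_of_card_lt_card (s := P ∪ Q) (t := Icc 1 n) <| by
    rw [card_union_of_disjoint hPQ, (mem_powersetCard.1 (x0Supports_subset (by omega) hℰ hP)).2,
      (mem_powersetCard.1 (x0Supports_subset (by omega) hℰ hQ)).2, Nat.card_Icc]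
    omega
  rw [mem_union, not_or] at hjPQ
  exact exists_compression_of_disjoint_x0Supports (by omega) hℰ hint hP hQ hPQ hj hjPQ.1 hjPQ.2

lemma exists_intersecting_x0Supports (hr : 2 ≤ r) (hrn : 2 * r - 2 ≤ n)
    {ℰ : Finset (Finset (ℕ × ℕ))} (hℰ : ℰ ⊆ depthTwoClawIndep n r)
    (hint : (ℰ : Set (Finset (ℕ × ℕ))).Intersecting) :
    ∃ ℰ' ⊆ depthTwoClawIndep n r, (ℰ' : Set (Finset (ℕ × ℕ))).Intersecting ∧ #ℰ' = #ℰ ∧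
      (x0Supports ℰ' : Set (Finset ℕ)).Intersecting := by
  induction h : #{A ∈ ℰ | x₀ ∈ A} using Nat.strong_induction_on generalizing ℰ with
  | _ k ih =>
  by_cases hsupp : (x0Supports ℰ : Set (Finset ℕ)).Intersecting
  · exact ⟨ℰ, hℰ, hint, rfl, hsupp⟩
  obtain ⟨ℰ₁, hℰ₁, hint₁, hcard₁, hlt⟩ :=
    exists_fewer_x0_of_not_intersecting_x0Supports hr hrn hℰ hint hsupp
  obtain ⟨ℰ', hℰ', hint', hcard', hsupp'⟩ := ih _ (h ▸ hlt) hℰ₁ hint₁ rfl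
  exact ⟨ℰ', hℰ', hint', hcard'.trans hcard₁, hsupp'⟩

lemma card_le_card_star_one (hn : 1 ≤ n) {ℰ : Finset (Finset (ℕ × ℕ))}
    (hℰ : ℰ ⊆ depthTwoClawIndep n 1) (hint : (ℰ : Set (Finset (ℕ × ℕ))).Intersecting) :
    #ℰ ≤ #{I ∈ depthTwoClawIndep n 1 | x₁ ∈ I} := by
  have hx₁ : ({x₁} : Finset (ℕ × ℕ)) ∈ depthTwoClawIndep n 1 := by
    rw [mem_depthTwoClawIndep_iff_mem_signedSets (by simp), show {x₁} = xSet {1} by simp [xSet]]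
    exact xSet_mem_signedSets (by simpa using hn) rfl
  calc #ℰ ≤ 1 := card_le_one.2 fun A hA B hB => by
        obtain ⟨a, rfl⟩ := card_eq_one.1 (mem_depthTwoClawIndep.1 (hℰ hA)).2.1
        obtain ⟨b, rfl⟩ := card_eq_one.1 (mem_depthTwoClawIndep.1 (hℰ hB)).2.1
        simpa using hint hA hB
    _ ≤ #{I ∈ depthTwoClawIndep n 1 | x₁ ∈ I} :=
        card_pos.2 ⟨_, mem_filter.2 ⟨hx₁, mem_singleton_self _⟩⟩

end DepthTwoClaw

/-- **Theorem.** If `n ≥ 2r - 2` and `n ≥ 2`, then every intersecting family of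
`r`-element independent sets of the depth-two claw `Tₙ` has size at most the
number of `r`-element independent sets of `Tₙ` containing the vertex
`x₁ = (1,1)`. -/
theorem depthTwoClaw_star_property_case_one
    (n r : ℕ) (hn : 2 ≤ n) (hr : 1 ≤ r) (hrn : 2 * r - 2 ≤ n)
    (ℰ : Finset (Finset (ℕ × ℕ)))
    (hℰ : ℰ ⊆ depthTwoClawIndep n r)
    (hint : ∀ A ∈ ℰ, ∀ B ∈ ℰ, (A ∩ B).Nonempty) :
    ℰ.card ≤
      ((depthTwoClawIndep n r).filter (fun I => ((1 : ℕ), (1 : ℕ)) ∈ I)).card := by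
  have hℰint : (ℰ : Set (Finset (ℕ × ℕ))).Intersecting := fun A hA B hB =>
    not_disjoint_iff_nonempty_inter.2 (hint A hA B hB)
  obtain rfl | hr := hr.eq_or_lt
  · exact card_le_card_star_one (by omega) hℰ hℰint
  obtain ⟨ℰ', hℰ', hℰ'int, hcard, hsupp⟩ := exists_intersecting_x0Supports hr hrn hℰ hℰint
  exact hcard ▸ card_le_card_star_of_intersecting_x0Supports hr hrn hℰ' hℰ'int hsupp
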